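/- Let F : P(Z) → R be G-invariant and of class C¹ (with linear functional derivative ∂F/∂μ and intrinsic derivative D_μF). Then the linear functional derivative is jointly invariant and the intrinsic derivative is jointly equivariant: for all g ∈ G, μ ∈ P(Z), z ∈ Z, (∂F/∂μ)(M_g#μ, M_g·z) = (∂F/∂μ)(μ, z) and D_μF(M_g#μ, M_g·z) = M_g · D_μF(μ, z). -/

import Mathlib

/-!
Pushing forward by the measurable bijection `M g` commutes with forming the mixtures
`(1 - h) • μ + h • ν` and with integration, so when `F` is invariant the function
`(μ, z) ↦ δF (M g # μ) (M g z)` is again a linear functional derivative of `F`; uniqueness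
gives the invariance of `δF`. Equivariance of the gradient follows by differentiating
`δF μ = δF (M g # μ) ∘ M g`, since the gradient of a function composed with a linear isometry
is pulled back by that isometry.
-/

open MeasureTheory Filter Topology
open scoped NNReal

section
variable {Z : Type*} [NormedAddCommGroup Z] [InnerProductSpace ℝ Z] [FiniteDimensional ℝ Z]
  [MeasurableSpace Z] [BorelSpace Z]

/-- `δF` is a linear functional derivative of `F` on probability measures. -/
def IsLFDeriv (F : Measure Z → ℝ) (δF : Measure Z → Z → ℝ) : Prop :=
  (∀ μ ν : Measure Z, IsProbabilityMeasure μ → IsProbabilityMeasure ν →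
    Tendsto (fun h : ℝ≥0 => (F ((1 - h) • μ + h • ν) - F μ) / (h : ℝ))
      (nhdsWithin 0 (Set.Ioi 0)) (nhds ((∫ z, δF μ z ∂ν) - ∫ z, δF μ z ∂μ))) ∧
  (∀ μ : Measure Z, IsProbabilityMeasure μ → ∫ z, δF μ z ∂μ = 0)

theorem gradient_comp_linearIsometryEquiv {E F : Type*} [NormedAddCommGroup E]
    [InnerProductSpace ℝ E] [CompleteSpace E] [NormedAddCommGroup F] [InnerProductSpace ℝ F]
    [CompleteSpace F] (A : E ≃ₗᵢ[ℝ] F) (f : F → ℝ) (x : E) :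
    gradient (f ∘ A) x = A.symm (gradient f (A x)) := by
  apply (InnerProductSpace.toDual ℝ E).injective
  ext y
  rw [toDual_gradient, show f ∘ A = f ∘ A.toContinuousLinearEquiv from rfl,
    ContinuousLinearEquiv.comp_right_fderiv,
    InnerProductSpace.toDual_apply_apply, LinearIsometryEquiv.inner_map_eq_flip]
  simp [inner_gradient_left]

theorem isProbabilityMeasure_convexCombination {α : Type*} [MeasurableSpace α]
    {μ ν : Measure α} [IsProbabilityMeasure μ] [IsProbabilityMeasure ν] {t : ℝ≥0} (ht : t ≤ 1) :
    IsProbabilityMeasure ((1 - t) • μ + t • ν) where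
  measure_univ := by
    simpa using tsub_add_cancel_of_le (ENNReal.coe_le_one_iff.mpr ht)

theorem IsLFDeriv.comp_map {X : Type*} [MeasurableSpace X] {F : Measure X → ℝ}
    {δF : Measure X → X → ℝ} (hδF : IsLFDeriv F δF) (e : X ≃ᵐ X)
    (hFe : ∀ μ : Measure X, IsProbabilityMeasure μ → F (μ.map e) = F μ) :
    IsLFDeriv F (fun μ z => δF (μ.map e) (e z)) := by
  have hmap : ∀ μ : Measure X, IsProbabilityMeasure μ → IsProbabilityMeasure (μ.map e) :=
    fun μ _ => Measure.isProbabilityMeasure_map e.measurable.aemeasurable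
  refine ⟨fun μ ν hμ hν => ?_, fun μ hμ => ?_⟩
  · have hlim := hδF.1 _ _ (hmap μ hμ) (hmap ν hν)
    simp only [integral_map_equiv] at hlim
    refine hlim.congr' ?_
    have hsmall : ∀ᶠ t : ℝ≥0 in 𝓝[>] 0, t ≤ 1 :=
      eventually_nhdsWithin_of_eventually_nhds (eventually_le_nhds zero_lt_one)
    filter_upwards [hsmall] with t ht
    have hmix := isProbabilityMeasure_convexCombination (μ := μ) (ν := ν) ht
    rw [← Measure.map_smul, ← Measure.map_smul, ← Measure.map_add _ _ e.measurable,
      hFe _ hmix, hFe μ hμ]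
  · simpa only [integral_map_equiv] using hδF.2 _ (hmap μ hμ)

theorem lfd_of_invariant_functional_general
    {G : Type*}
    (M : G → Z ≃ₗᵢ[ℝ] Z)
    (F : Measure Z → ℝ) (δF : Measure Z → Z → ℝ)
    (hlfd : IsLFDeriv F δF)
    (huniq : ∀ δ' : Measure Z → Z → ℝ, IsLFDeriv F δ' →
      ∀ (μ : Measure Z), IsProbabilityMeasure μ → ∀ z, δ' μ z = δF μ z)
    (hFinv : ∀ (g : G) (μ : Measure Z), IsProbabilityMeasure μ →
      F (μ.map (M g)) = F μ) :
    ∀ (g : G) (μ : Measure Z), IsProbabilityMeasure μ → ∀ z : Z,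
      δF (μ.map (M g)) (M g z) = δF μ z ∧
      gradient (δF (μ.map (M g))) (M g z) = M g (gradient (δF μ) z) := by
  intro g μ hμ z
  have hinv : ∀ ν : Measure Z, IsProbabilityMeasure ν → ∀ w,
      δF (ν.map (M g)) (M g w) = δF ν w :=
    huniq _ (hlfd.comp_map (M g).toHomeomorph.toMeasurableEquiv (hFinv g))
  have hδF : δF μ = δF (μ.map (M g)) ∘ M g := funext fun w => (hinv μ hμ w).symm
  refine ⟨hinv μ hμ z, ?_⟩
  rw [hδF, gradient_comp_linearIsometryEquiv, LinearIsometryEquiv.apply_symm_apply]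

theorem lfd_of_invariant_functional
    {G : Type*} [Group G] [TopologicalSpace G] [IsTopologicalGroup G] [CompactSpace G]
    (M : G → Z ≃ₗᵢ[ℝ] Z)
    (hrep : ∀ g h z, M (g * h) z = M g (M h z))
    (F : Measure Z → ℝ) (δF : Measure Z → Z → ℝ)
    (hlfd : IsLFDeriv F δF)
    (huniq : ∀ δ' : Measure Z → Z → ℝ, IsLFDeriv F δ' →
      ∀ (μ : Measure Z), IsProbabilityMeasure μ → ∀ z, δ' μ z = δF μ z)
    (hbdd : ∀ μ : Measure Z, IsProbabilityMeasure μ → ∃ C : ℝ, ∀ z, |δF μ z| ≤ C)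
    (hcont : ∀ μ : Measure Z, IsProbabilityMeasure μ → Continuous (δF μ))
    (hFinv : ∀ (g : G) (μ : Measure Z), IsProbabilityMeasure μ →
      F (μ.map (M g)) = F μ) :
    ∀ (g : G) (μ : Measure Z), IsProbabilityMeasure μ → ∀ z : Z,
      δF (μ.map (M g)) (M g z) = δF μ z ∧
      gradient (δF (μ.map (M g))) (M g z) = M g (gradient (δF μ) z) :=
  lfd_of_invariant_functional_general M F δF hlfd huniq hFinv

end
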